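/- arXiv:1105.6202 — 3 statements merged into one kernel-verified Lean document; each statement's English description precedes it below -/
import Mathlib

section
/- Let V be a finite-dimensional real vector space with dim V ≥ 2, B a nondegenerate symmetric bilinear form on V, and m ∈ ℝ with m ≠ 0. If v ∈ V and c ∈ ℝ satisfy B(v,x)·B(v,y) − (1/2)·B(v,v)·B(x,y) + (1/2)·m²·c²·B(x,y) = 0 for all x, y ∈ V, then v = 0 and c = 0. (Interpretation: if the classical stress-energy tensor T_{ab} = v_a v_b − (1/2)g_{ab} v·v + (1/2)m² g_{ab} c² of a massive scalar field vanishes at a point, then both the field value c and its gradient v vanish at that point.) -/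
/-- If the pointwise stress-energy tensor
`B(v,x)·B(v,y) − (1/2)·B(v,v)·B(x,y) + (1/2)·m²·c²·B(x,y)` of a massive (`m ≠ 0`)
scalar field vanishes for all `x, y`, with `B` a nondegenerate symmetric bilinear form
on a real vector space of dimension at least 2, then the field value `c` and the
gradient `v` vanish. -/
theorem massive_stress_energy_vanishing_forces_trivial
    (V : Type*) [AddCommGroup V] [Module ℝ V] [FiniteDimensional ℝ V]
    (hdim : 2 ≤ Module.finrank ℝ V)
    (B : V →ₗ[ℝ] V →ₗ[ℝ] ℝ)
    (hsymm : ∀ x y : V, B x y = B y x)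
    (hnd : ∀ x : V, (∀ y : V, B x y = 0) → x = 0)
    (m : ℝ) (hm : m ≠ 0)
    (v : V) (c : ℝ)
    (h : ∀ x y : V,
      B v x * B v y - (1/2) * B v v * B x y + (1/2) * m^2 * c^2 * B x y = 0) :
    v = 0 ∧ c = 0 := by
  set k : ℝ := -(1/2) * B v v + (1/2) * m^2 * c^2 with hk_def
  have key : ∀ x y : V, B v x * B v y + k * B x y = 0 := by
    intro x y
    have := h x y
    rw [hk_def]; ring_nf; ring_nf at this; linarith
  have hk : k = 0 := by
    by_contra hk
    -- find nonzero x in ker (B v)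
    have hker : LinearMap.ker (B v) ≠ ⊥ := by
      intro hb
      have hinj := LinearMap.ker_eq_bot.mp hb
      have := LinearMap.finrank_le_finrank_of_injective hinj
      simp [Module.finrank_self] at this
      omega
    obtain ⟨x, hx, hx0⟩ := Submodule.ne_bot_iff _ |>.mp hker
    have hvx : B v x = 0 := hx
    have : ∀ y : V, B x y = 0 := by
      intro y
      have := key x y
      rw [hvx] at this
      have : k * B x y = 0 := by linarith
      exact (mul_eq_zero.mp this).resolve_left hk
    exact hx0 (hnd x this)
  have hv : v = 0 := by
    apply hnd
    intro y
    have := key y y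
    rw [hk] at this
    have : (B v y)^2 = 0 := by rw [hsymm v y] at this ⊢; nlinarith
    exact pow_eq_zero_iff (n := 2) (by norm_num) |>.mp this
  refine ⟨hv, ?_⟩
  rw [hv] at hk_def
  simp at hk_def
  have : m^2 * c^2 = 0 := by rw [hk] at hk_def; linarith
  rcases mul_eq_zero.mp this with h1 | h2
  · exact absurd (pow_eq_zero_iff (n := 2) (by norm_num) |>.mp h1) hm
  · exact pow_eq_zero_iff (n := 2) (by norm_num) |>.mp h2
end

section
/- Let V be a finite-dimensional real vector space with dim V ≥ 2 and let B be a nondegenerate symmetric bilinear form on V. If v ∈ V satisfies B(v,x)·B(v,y) = (1/2)·B(v,v)·B(x,y) for all x, y ∈ V, then v = 0. (Interpretation: if the classical stress-energy tensor of a massless scalar field vanishes at a point, then the gradient of the field vanishes at that point, so the field is only forced to be locally constant, not zero.) -/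
/-- If `B` is a nondegenerate symmetric bilinear form on a real vector
space of dimension at least 2 and `B(v,x)·B(v,y) = (1/2)·B(v,v)·B(x,y)` for all
`x, y` (vanishing of the massless stress-energy tensor at a point), then `v = 0`. -/
theorem massless_stress_energy_vanishing_forces_gradient_zero
    (V : Type*) [AddCommGroup V] [Module ℝ V] [FiniteDimensional ℝ V]
    (hdim : 2 ≤ Module.finrank ℝ V)
    (B : V →ₗ[ℝ] V →ₗ[ℝ] ℝ)
    (hsymm : ∀ x y : V, B x y = B y x)
    (hnd : ∀ x : V, (∀ y : V, B x y = 0) → x = 0)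
    (v : V)
    (h : ∀ x y : V, B v x * B v y = (1/2) * B v v * B x y) :
    v = 0 := by
  have hc : B v v = 0 := by have := h v v; nlinarith [h v v]
  apply hnd
  intro y
  have := h y y
  rw [hc] at this
  nlinarith [this]
end

section
/- Let C be a connected category (nonempty, with any two objects joined by a zigzag of morphisms), let D be a category, and let F : C ⥤ D be a functor such that F(ψ) is an isomorphism for every morphism ψ of C. Suppose that for some object M₀ of C the only automorphism of F(M₀) in D is the identity. Then F is naturally isomorphic to the constant functor on C with value F(M₀). (This is the categorical content of the theorem that a diagonal theory, all of whose constituent theories are equivalent and have trivial automorphism group, is equivalent to each of them.) -/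
open CategoryTheory

/-- a morphism-inverting functor out of a connected category, whose value
at some object `M₀` has no nontrivial automorphisms, is naturally isomorphic to the
constant functor with value `F.obj M₀`. -/
theorem morphism_inverting_functor_iso_const_of_no_nontrivial_automorphisms
    {C D : Type*} [Category C] [Category D] [IsConnected C]
    (F : C ⥤ D) (hF : ∀ {X Y : C} (ψ : X ⟶ Y), IsIso (F.map ψ))
    (M₀ : C) (haut : ∀ α : F.obj M₀ ≅ F.obj M₀, α = Iso.refl (F.obj M₀)) :
    Nonempty (F ≅ (Functor.const C).obj (F.obj M₀)) := by
  have uniq : ∀ (X : C) (e e' : F.obj X ≅ F.obj M₀), e = e' := by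
    intro X e e'
    have h := haut (e.symm ≪≫ e')
    calc e = e ≪≫ (e.symm ≪≫ e') := by rw [h]; simp
    _ = e' := by simp
  have ex : ∀ X : C, Nonempty (F.obj X ≅ F.obj M₀) := by
    intro X
    have h : Zigzag X M₀ := isPreconnected_zigzag X M₀
    clear haut uniq
    induction h with
    | refl => exact ⟨Iso.refl _⟩
    | tail _ z ih =>
      obtain ⟨e⟩ := ih
      rcases z with ⟨⟨f⟩⟩ | ⟨⟨f⟩⟩
      · haveI := hF f
        exact ⟨e ≪≫ asIso (F.map f)⟩
      · haveI := hF f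
        exact ⟨e ≪≫ (asIso (F.map f)).symm⟩
  let e : ∀ X : C, F.obj X ≅ F.obj M₀ := fun X => (ex X).some
  refine ⟨NatIso.ofComponents e ?_⟩
  intro X Y f
  haveI := hF f
  have h : e X = asIso (F.map f) ≪≫ e Y := uniq X _ _
  have := congrArg Iso.hom h
  simp only [Iso.trans_hom, asIso_hom] at this
  simp [this]
end
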